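/- Let ζ = i ∈ ℂ (a primitive 4th root of unity) and for a natural number d define the Vafa–Intriligator sum S_d = Σ_{0 ≤ i₂ < i₁ ≤ 3} (ζ^{i₁} + ζ^{i₂})^{4d+4} · (ζ^{i₁} − ζ^{i₂}) · (ζ^{i₂} − ζ^{i₁}) / (ζ^{i₁} · ζ^{i₂})³. Then the absolute value of (1/16) · S_d equals 2^{2d+1}. (This is the degree P_d of the Quot scheme R_d compactifying degree-d maps ℙ¹ → G(2,4) under the generalized Plücker embedding: P_d = 2^{2d+1}.) -/

import Mathlib

open Finset Complex

/-- The Vafa–Intriligator sum for `G(2,4)` in degree `d`, with `ζ = i` a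
primitive 4th root of unity. -/
noncomputable def vafaIntriligatorSum (d : ℕ) : ℂ :=
  ∑ i₁ ∈ Finset.range 4, ∑ i₂ ∈ Finset.range i₁,
    (Complex.I ^ i₁ + Complex.I ^ i₂) ^ (4 * d + 4) *
      (Complex.I ^ i₁ - Complex.I ^ i₂) * (Complex.I ^ i₂ - Complex.I ^ i₁) /
        (Complex.I ^ i₁ * Complex.I ^ i₂) ^ 3

/-!
Of the six pairs of distinct 4th roots of unity, the two antipodal pairs contribute nothing,
since `x + y = 0`. For the four adjacent pairs `x² + y² = 0`, so `(x + y)² = 2xy` and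
`(x - y)(y - x) = 2xy`; with `(xy)² = -1` every such term equals `-2 · (-4)^(d+1)`.
Hence `S_d = -8 · (-4)^(d+1)` and `‖S_d / 16‖ = 2 · 4^d`.
-/

section VafaIntriligatorTerm

variable {K : Type*} [Field K]

def vafaIntriligatorTerm (d : ℕ) (x y : K) : K :=
  (x + y) ^ (4 * d + 4) * (x - y) * (y - x) / (x * y) ^ 3

theorem vafaIntriligatorTerm_neg_left (d : ℕ) (y : K) :
    vafaIntriligatorTerm d (-y) y = 0 := by
  simp [vafaIntriligatorTerm]

theorem vafaIntriligatorTerm_of_sq_add_sq_eq_zero {d : ℕ} {x y : K}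
    (hxy : x ^ 2 + y ^ 2 = 0) (hy : y ^ 4 = 1) :
    vafaIntriligatorTerm d x y = -2 * (-4) ^ (d + 1) := by
  have hy0 : y ≠ 0 := by rintro rfl; simp at hy
  have hx0 : x ≠ 0 := by rintro rfl; simp_all
  have hsum : (x + y) ^ 2 = 2 * (x * y) := by linear_combination hxy
  have hdiff : (x - y) * (y - x) = 2 * (x * y) := by linear_combination -hxy
  have hprod : (x * y) ^ 2 = -1 := by linear_combination y ^ 2 * hxy - hy
  calc vafaIntriligatorTerm d x y
      = ((x + y) ^ 2) ^ (2 * d + 2) * ((x - y) * (y - x)) / (x * y) ^ 3 := by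
        rw [vafaIntriligatorTerm, ← pow_mul]; ring
    _ = 2 ^ (2 * d + 3) * ((x * y) ^ 2) ^ d := by
        rw [hsum, hdiff]; field_simp; ring
    _ = -2 * (-4) ^ (d + 1) := by
        rw [hprod, show (-4 : K) = -1 * 2 ^ 2 by norm_num, mul_pow, ← pow_mul]; ring

end VafaIntriligatorTerm

theorem vafaIntriligatorSum_eq (d : ℕ) : vafaIntriligatorSum d = -8 * (-4) ^ (d + 1) := by
  have hadj (x y : ℂ) (hxy : x ^ 2 + y ^ 2 = 0) (hy : y ^ 4 = 1) :=
    vafaIntriligatorTerm_of_sq_add_sq_eq_zero (d := d) hxy hy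
  change ∑ i₁ ∈ range 4, ∑ i₂ ∈ range i₁, vafaIntriligatorTerm d (I ^ i₁) (I ^ i₂) = _
  simp only [sum_range_succ, sum_range_zero, pow_zero, pow_one, I_sq, I_pow_three, zero_add]
  rw [hadj I 1 (by simp) (by simp), hadj (-1) I (by simp) I_pow_four,
    hadj (-I) 1 (by simp) (by simp), hadj (-I) (-1) (by simp) (by norm_num)]
  simp only [vafaIntriligatorTerm_neg_left]
  ring

/-- The degree `P_d` of the Quot scheme `R_d` under the generalized Plücker
embedding equals `2^{2d+1}`: the absolute value of `(1/16) · S_d` is `2^{2d+1}`. -/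
theorem pluecker_degree_quot_scheme (d : ℕ) :
    ‖(1 / 16 : ℂ) * vafaIntriligatorSum d‖ = 2 ^ (2 * d + 1) := by
  rw [vafaIntriligatorSum_eq, norm_mul, norm_mul, norm_pow, norm_neg, norm_neg]
  simp only [one_div, norm_inv, Complex.norm_ofNat]
  rw [pow_succ (2 : ℝ), pow_mul]
  norm_num
  ring
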